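/- Let F, F̃ be finitely supported sequences ℤ → ℂ whose supports lie entirely to the left of the supports of the finitely supported sequences G, G̃ (every element of supp F ∪ supp F̃ is strictly smaller than every element of supp G ∪ supp G̃). Let (a,b), (ã,b̃), (c,d), (c̃,d̃) be the SU(2) nonlinear Fourier series of F, F̃, G, G̃ respectively. Then ρ((a,b)(c,d), (ã,b̃)(c̃,d̃)) ≤ 2·ρ((a,b),(ã,b̃)) + 2·ρ((c,d),(c̃,d̃)). -/

import Mathlib

/-!
On the unit circle every factor of the nonlinear Fourier series is a unitary matrix, so
`|a|, |b| ≤ 1` there. Writing `ac − bd* − (ãc̃ − b̃d̃*) = (a − ã)c + ã(c − c̃) − …`, both components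
of the difference of the products are bounded pointwise by `|a − ã| + |b − b̃| + |c − c̃| + |d − d̃|`,
and Minkowski's inequality turns this into the bound on the two `L²` terms.

For the logarithmic term, `a` is a Laurent polynomial in `z⁻¹` with nonzero constant coefficient,
the frequencies of `b` lie below the support of `F` and (building the product from its right
end) those of `d` above the support of `G`. Hence `b d*` has mean zero, the mean of `ac − bd*` is
`a(∞) c(∞)`, and its logarithm splits additively.
-/

open MeasureTheory Filter

noncomputable section

/-- The SU(2) NLFT factor `(1+|F n|²)^{-1/2} · [[1, F n zⁿ],[−conj(F n) z⁻ⁿ, 1]]`. -/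
def nlftFactor (F : ℤ → ℂ) (n : ℤ) (z : ℂ) : Matrix (Fin 2) (Fin 2) ℂ :=
  (((Real.sqrt (1 + ‖F n‖ ^ 2))⁻¹ : ℝ) : ℂ) •
    !![1, F n * z ^ n; -(starRingEnd ℂ (F n)) * z ^ (-n), 1]

/-- Ordered product of the NLFT factors for `-K ≤ n ≤ K`. -/
def nlftPartial (F : ℤ → ℂ) (K : ℕ) (z : ℂ) : Matrix (Fin 2) (Fin 2) ℂ :=
  (((List.range (2 * K + 1)).map (fun j => nlftFactor F ((j : ℤ) - (K : ℤ)) z)).prod)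

open Classical in
/-- A bound for the support of a finitely supported sequence. -/
def suppBound (F : ℤ → ℂ) : ℕ :=
  if h : (Function.support F).Finite then h.toFinset.sup (fun n => n.natAbs) else 0

/-- The SU(2) nonlinear Fourier series of a finitely supported sequence `F : ℤ → ℂ`,
evaluated at `z`: the ordered product over increasing `n` of the factors
`(1+|F n|²)^{-1/2} · [[1, F n zⁿ],[−conj(F n) z⁻ⁿ, 1]]`. -/
def nlft (F : ℤ → ℂ) (z : ℂ) : Matrix (Fin 2) (Fin 2) ℂ := nlftPartial F (suppBound F) z

/-- First entry `a(z)` of the nonlinear Fourier series. -/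
def nlftA (F : ℤ → ℂ) (z : ℂ) : ℂ := nlft F z 0 0

/-- Second entry `b(z)` of the nonlinear Fourier series. -/
def nlftB (F : ℤ → ℂ) (z : ℂ) : ℂ := nlft F z 0 1

/-- The star `c*(z) = conj (c (1/conj z))`. -/
def starFun (f : ℂ → ℂ) (z : ℂ) : ℂ := starRingEnd ℂ (f ((starRingEnd ℂ z)⁻¹))

/-- Parametrization of the unit circle. -/
def circMap (θ : ℝ) : ℂ := Complex.exp (2 * Real.pi * Complex.I * θ)

/-- Normalized Lebesgue measure on a fundamental domain for the circle. -/
def circMeas : Measure ℝ := volume.restrict (Set.Ioc (0:ℝ) 1)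

/-- `n`-th Fourier coefficient of a function on the unit circle. -/
def circCoeff (f : ℂ → ℂ) (n : ℤ) : ℂ :=
  ∫ θ in (0:ℝ)..1, f (circMap θ) * Complex.exp (-(2 * Real.pi * Complex.I * n * θ))

/-- `L²(𝕋)` distance between two functions on the unit circle. -/
def circL2dist (f g : ℂ → ℂ) : ℝ :=
  Real.sqrt (∫ θ in (0:ℝ)..1, ‖f (circMap θ) - g (circMap θ)‖ ^ 2)

/-- Measurability of a function on the unit circle. -/
def CircMeasurable (f : ℂ → ℂ) : Prop := Measurable fun θ : ℝ => f (circMap θ)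

/-- The nonlinear Fourier series of `F` as a pair `(a,b)`. -/
def nlftPair (F : ℤ → ℂ) : (ℂ → ℂ) × (ℂ → ℂ) := (nlftA F, nlftB F)

/-- Product of pairs: `(a,b)(c,d) = (ac − b d*, ad + b c*)`. -/
def pairProd (p q : (ℂ → ℂ) × (ℂ → ℂ)) : (ℂ → ℂ) × (ℂ → ℂ) :=
  (fun z => p.1 z * q.1 z - p.2 z * starFun q.2 z,
   fun z => p.1 z * q.2 z + p.2 z * starFun q.1 z)

/-- The metric `ρ((a,b),(c,d)) = ‖a−c‖_{L²(𝕋)} + ‖b−d‖_{L²(𝕋)} + |log a(∞) − log c(∞)|`,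
where the value at `∞` is the mean over the circle. -/
def rhoDist (p q : (ℂ → ℂ) × (ℂ → ℂ)) : ℝ :=
  circL2dist p.1 q.1 + circL2dist p.2 q.2 +
    |Real.log ‖circCoeff p.1 0‖ - Real.log ‖circCoeff q.1 0‖|

open ComplexConjugate

theorem circMap_ne_zero (θ : ℝ) : circMap θ ≠ 0 := Complex.exp_ne_zero _

theorem norm_circMap (θ : ℝ) : ‖circMap θ‖ = 1 := by
  rw [circMap, Complex.norm_exp]
  simp [Complex.mul_re]

theorem circMap_zpow (θ : ℝ) (k : ℤ) :
    circMap θ ^ k = Complex.exp (2 * Real.pi * Complex.I * k * θ) := by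
  rw [circMap, ← Complex.exp_int_mul]
  ring_nf

theorem integral_circMap_zpow (k : ℤ) :
    ∫ θ in (0:ℝ)..1, circMap θ ^ k = if k = 0 then 1 else 0 := by
  simp_rw [circMap_zpow]
  split_ifs with hk
  · simp [hk]
  have hc : 2 * Real.pi * Complex.I * k ≠ 0 := by simp [Real.pi_ne_zero, hk]
  rw [integral_exp_mul_complex hc]
  push_cast
  rw [mul_one, mul_zero, Complex.exp_zero,
    show 2 * Real.pi * Complex.I * k = k * (2 * Real.pi * Complex.I) by ring,
    Complex.exp_int_mul_two_pi_mul_I]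
  simp

theorem starFun_circMap (f : ℂ → ℂ) (θ : ℝ) :
    starFun f (circMap θ) = conj (f (circMap θ)) := by
  rw [starFun, ← Complex.inv_eq_conj (norm_circMap θ), inv_inv]

theorem circCoeff_zero_eq_integral (f : ℂ → ℂ) :
    circCoeff f 0 = ∫ θ in (0:ℝ)..1, f (circMap θ) := by
  simp [circCoeff]

theorem circCoeff_zero_sub {f g : ℂ → ℂ} (hf : Continuous fun θ => f (circMap θ))
    (hg : Continuous fun θ => g (circMap θ)) :
    circCoeff (fun z => f z - g z) 0 = circCoeff f 0 - circCoeff g 0 := by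
  simp only [circCoeff_zero_eq_integral]
  exact intervalIntegral.integral_sub (hf.intervalIntegrable _ _) (hg.intervalIntegrable _ _)

def HasLaurentCoeffs (f : ℂ → ℂ) (u : ℤ → ℂ) : Prop :=
  ∃ s : Finset ℤ, (∀ k ∉ s, u k = 0) ∧ ∀ z ≠ 0, f z = ∑ k ∈ s, u k * z ^ k

namespace HasLaurentCoeffs

variable {f g : ℂ → ℂ} {u v : ℤ → ℂ}

theorem eq_sum (hf : HasLaurentCoeffs f u) {s : Finset ℤ} (hs : ∀ k ∉ s, u k = 0) {z : ℂ}
    (hz : z ≠ 0) : f z = ∑ k ∈ s, u k * z ^ k := by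
  obtain ⟨t, ht, hft⟩ := hf
  rw [hft z hz]
  have hsub : ∀ r ⊆ t ∪ s, (∀ k ∉ r, u k = 0) →
      ∑ k ∈ r, u k * z ^ k = ∑ k ∈ t ∪ s, u k * z ^ k := fun r hr hu =>
    Finset.sum_subset hr fun k _ hk => by rw [hu k hk, zero_mul]
  rw [hsub t Finset.subset_union_left ht, hsub s Finset.subset_union_right hs]

theorem zero : HasLaurentCoeffs 0 0 := ⟨∅, fun _ _ => rfl, fun _ _ => by simp⟩

theorem one : HasLaurentCoeffs 1 (Pi.single 0 1) :=
  ⟨{0}, fun k hk => Pi.single_eq_of_ne (by simpa using hk) _, fun _ _ => by simp⟩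

theorem add (hf : HasLaurentCoeffs f u) (hg : HasLaurentCoeffs g v) :
    HasLaurentCoeffs (fun z => f z + g z) (fun k => u k + v k) := by
  obtain ⟨s, hs, -⟩ := id hf
  obtain ⟨t, ht, -⟩ := id hg
  have hs' : ∀ k ∉ s ∪ t, u k = 0 := fun k hk => hs k (by simp_all)
  have ht' : ∀ k ∉ s ∪ t, v k = 0 := fun k hk => ht k (by simp_all)
  refine ⟨s ∪ t, fun k hk => by simp only [hs' k hk, ht' k hk, add_zero], fun z hz => ?_⟩
  simp only [add_mul, Finset.sum_add_distrib, ← hf.eq_sum hs' hz, ← hg.eq_sum ht' hz]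

theorem const_mul (hf : HasLaurentCoeffs f u) (c : ℂ) :
    HasLaurentCoeffs (fun z => c * f z) (fun k => c * u k) := by
  obtain ⟨s, hs, hfs⟩ := hf
  refine ⟨s, fun k hk => by simp only [hs k hk, mul_zero], fun z hz => ?_⟩
  simp only [hfs z hz, Finset.mul_sum, mul_assoc]

theorem zpow_mul (hf : HasLaurentCoeffs f u) (n : ℤ) :
    HasLaurentCoeffs (fun z => z ^ n * f z) (fun k => u (k - n)) := by
  obtain ⟨s, hs, hfs⟩ := hf
  refine ⟨s.map (addRightEmbedding n), fun k hk => hs _ fun h => hk ?_, fun z hz => ?_⟩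
  · exact Finset.mem_map.2 ⟨k - n, h, by simp⟩
  simp only [hfs z hz, Finset.sum_map, Finset.mul_sum]
  refine Finset.sum_congr rfl fun k _ => ?_
  simp only [addRightEmbedding_apply, add_sub_cancel_right, zpow_add₀ hz]
  ring

theorem starFun (hf : HasLaurentCoeffs f u) :
    HasLaurentCoeffs (starFun f) (fun k => conj (u (-k))) := by
  obtain ⟨s, hs, hfs⟩ := hf
  refine ⟨s.map (Equiv.neg ℤ).toEmbedding, fun k hk => ?_, fun z hz => ?_⟩
  · simp only [hs (-k) fun h => hk (Finset.mem_map.2 ⟨-k, h, by simp⟩), map_zero]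
  rw [_root_.starFun, hfs _ (by simpa using hz), map_sum, Finset.sum_map]
  refine Finset.sum_congr rfl fun k _ => ?_
  simp [map_zpow₀, zpow_neg]

theorem continuous_comp_circMap (hf : HasLaurentCoeffs f u) :
    Continuous fun θ => f (circMap θ) := by
  obtain ⟨s, -, hfs⟩ := hf
  simp_rw [hfs _ (circMap_ne_zero _), circMap_zpow]
  fun_prop

theorem circCoeff_zero (hf : HasLaurentCoeffs f u) : circCoeff f 0 = u 0 := by
  obtain ⟨s, hs, hfs⟩ := hf
  rw [circCoeff_zero_eq_integral]
  simp_rw [hfs _ (circMap_ne_zero _)]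
  rw [intervalIntegral.integral_finsetSum fun k _ =>
    (Continuous.intervalIntegrable (by simp_rw [circMap_zpow]; fun_prop) _ _)]
  simp_rw [intervalIntegral.integral_const_mul, integral_circMap_zpow, mul_ite, mul_one, mul_zero]
  rw [Finset.sum_ite_eq']
  split_ifs with h
  · rfl
  · exact (hs 0 h).symm

theorem circCoeff_zero_mul (hf : HasLaurentCoeffs f u) (hg : HasLaurentCoeffs g v)
    {s : Finset ℤ} (hs : ∀ k ∉ s, u k = 0) :
    circCoeff (fun z => f z * g z) 0 = ∑ k ∈ s, u k * v (-k) := by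
  have hprod : ∀ θ, f (circMap θ) * g (circMap θ) =
      ∑ k ∈ s, u k * (circMap θ ^ k * g (circMap θ)) := fun θ => by
    rw [hf.eq_sum hs (circMap_ne_zero θ), Finset.sum_mul]
    exact Finset.sum_congr rfl fun k _ => mul_assoc _ _ _
  rw [circCoeff_zero_eq_integral, intervalIntegral.integral_congr fun θ _ => hprod θ,
    intervalIntegral.integral_finsetSum
      (f := fun k θ => u k * (circMap θ ^ k * g (circMap θ))) fun k _ =>
      (continuous_const.mul (hg.zpow_mul k).continuous_comp_circMap).intervalIntegrable _ _]
  refine Finset.sum_congr rfl fun k _ => ?_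
  rw [intervalIntegral.integral_const_mul,
    ← circCoeff_zero_eq_integral (fun z => z ^ k * g z), (hg.zpow_mul k).circCoeff_zero, zero_sub]

end HasLaurentCoeffs

def nlftProd (F : ℤ → ℂ) (s : ℤ) (m : ℕ) (z : ℂ) : Matrix (Fin 2) (Fin 2) ℂ :=
  ((List.range m).map fun j : ℕ => nlftFactor F (s + j) z).prod

theorem nlftPartial_eq_nlftProd (F : ℤ → ℂ) (K : ℕ) (z : ℂ) :
    nlftPartial F K z = nlftProd F (-K) (2 * K + 1) z := by
  simp [nlftPartial, nlftProd, List.map_eq_flatMap, List.flatMap_assoc, neg_add_eq_sub]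

theorem nlftProd_succ (F : ℤ → ℂ) (s : ℤ) (m : ℕ) (z : ℂ) :
    nlftProd F s (m + 1) z = nlftProd F s m z * nlftFactor F (s + m) z := by
  simp [nlftProd, List.range_succ]

theorem nlftProd_succ' (F : ℤ → ℂ) (s : ℤ) (m : ℕ) (z : ℂ) :
    nlftProd F s (m + 1) z = nlftFactor F s z * nlftProd F (s + 1) m z := by
  simp only [nlftProd, List.range_succ_eq_map, List.map_cons, List.map_map, List.prod_cons]
  congr 2
  · simp
  refine List.map_congr_left fun j _ => ?_
  simp [add_assoc, add_comm (1 : ℤ)]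

def nlftScale (F : ℤ → ℂ) (n : ℤ) : ℂ := ((Real.sqrt (1 + ‖F n‖ ^ 2))⁻¹ : ℝ)

theorem nlftScale_ne_zero (F : ℤ → ℂ) (n : ℤ) : nlftScale F n ≠ 0 := by
  rw [nlftScale, Complex.ofReal_ne_zero]
  positivity

section FactorEntries

variable (F : ℤ → ℂ) (n : ℤ) (z : ℂ) (M : Matrix (Fin 2) (Fin 2) ℂ)

theorem mul_nlftFactor_zero_zero : (M * nlftFactor F n z) 0 0 =
    nlftScale F n * (M 0 0 + -conj (F n) * (z ^ (-n) * M 0 1)) := by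
  simp [nlftFactor, nlftScale, Matrix.mul_apply]
  ring

theorem mul_nlftFactor_zero_one : (M * nlftFactor F n z) 0 1 =
    nlftScale F n * (M 0 1 + F n * (z ^ n * M 0 0)) := by
  simp [nlftFactor, nlftScale, Matrix.mul_apply]
  ring

theorem nlftFactor_mul_zero_one : (nlftFactor F n z * M) 0 1 =
    nlftScale F n * (M 0 1 + F n * (z ^ n * M 1 1)) := by
  simp [nlftFactor, nlftScale, Matrix.mul_apply]
  ring

theorem nlftFactor_mul_one_one : (nlftFactor F n z * M) 1 1 =
    nlftScale F n * (M 1 1 + -conj (F n) * (z ^ (-n) * M 0 1)) := by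
  simp [nlftFactor, nlftScale, Matrix.mul_apply]
  ring

end FactorEntries

theorem exists_hasLaurentCoeffs_nlftProd_row_zero (F : ℤ → ℂ) (s : ℤ) (m : ℕ) :
    ∃ u v, HasLaurentCoeffs (fun z => nlftProd F s m z 0 0) u ∧
      HasLaurentCoeffs (fun z => nlftProd F s m z 0 1) v ∧ u 0 ≠ 0 ∧
      (∀ k, u k ≠ 0 → k ≤ 0) ∧ ∀ k, v k ≠ 0 → k < s + m ∧ ∃ n, F n ≠ 0 ∧ k ≤ n := by
  induction m with
  | zero =>
    exact ⟨_, _, HasLaurentCoeffs.one, HasLaurentCoeffs.zero, by simp,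
      fun k hk => (by_contra fun h => hk (Pi.single_eq_of_ne h 1) : k = 0).le, by simp⟩
  | succ m ih =>
    obtain ⟨u, v, hu, hv, hu0, hu_supp, hv_supp⟩ := ih
    have hvn : v (s + m) = 0 := by_contra fun h => (hv_supp _ h).1.false
    simp only [nlftProd_succ, mul_nlftFactor_zero_zero, mul_nlftFactor_zero_one]
    refine ⟨_, _, (hu.add ((hv.zpow_mul _).const_mul _)).const_mul _,
      (hv.add ((hu.zpow_mul _).const_mul _)).const_mul _, ?_, fun k hk => ?_, fun k hk => ?_⟩
    · simpa [hvn] using mul_ne_zero (nlftScale_ne_zero F _) hu0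
    · by_contra! hk_pos
      have huk : u k = 0 := by_contra fun h => (hu_supp k h).not_gt hk_pos
      have hvk : v (k - -(s + m)) = 0 := by_contra fun h => by have := (hv_supp _ h).1; omega
      simp only [huk, hvk, mul_zero, add_zero, ne_eq, not_true_eq_false] at hk
    · replace hk := right_ne_zero_of_mul hk
      push_cast
      by_cases hvk : v k = 0
      · rw [hvk, zero_add] at hk
        have hk_le : k - (s + m) ≤ 0 := hu_supp _ (right_ne_zero_of_mul hk)
        exact ⟨by omega, _, left_ne_zero_of_mul hk, by omega⟩
      · obtain ⟨hk_lt, hF⟩ := hv_supp k hvk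
        exact ⟨by omega, hF⟩

theorem exists_hasLaurentCoeffs_nlftProd_col_one (F : ℤ → ℂ) (m : ℕ) (s : ℤ) :
    ∃ v w, HasLaurentCoeffs (fun z => nlftProd F s m z 0 1) v ∧
      HasLaurentCoeffs (fun z => nlftProd F s m z 1 1) w ∧
      (∀ k, w k ≠ 0 → 0 ≤ k) ∧ ∀ k, v k ≠ 0 → s ≤ k ∧ ∃ n, F n ≠ 0 ∧ n ≤ k := by
  induction m generalizing s with
  | zero =>
    exact ⟨_, _, HasLaurentCoeffs.zero, HasLaurentCoeffs.one,
      fun k hk => (by_contra fun h => hk (Pi.single_eq_of_ne h 1) : k = 0).ge, by simp⟩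
  | succ m ih =>
    obtain ⟨v, w, hv, hw, hw_supp, hv_supp⟩ := ih (s + 1)
    simp only [nlftProd_succ', nlftFactor_mul_zero_one, nlftFactor_mul_one_one]
    refine ⟨_, _, (hv.add ((hw.zpow_mul _).const_mul _)).const_mul _,
      (hw.add ((hv.zpow_mul _).const_mul _)).const_mul _, fun k hk => ?_, fun k hk => ?_⟩
    · by_contra! hk_neg
      have hwk : w k = 0 := by_contra fun h => (hw_supp k h).not_gt hk_neg
      have hvk : v (k - -s) = 0 := by_contra fun h => by have := (hv_supp _ h).1; omega
      simp only [hwk, hvk, mul_zero, add_zero, ne_eq, not_true_eq_false] at hk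
    · replace hk := right_ne_zero_of_mul hk
      by_cases hvk : v k = 0
      · rw [hvk, zero_add] at hk
        have hk_ge : 0 ≤ k - s := hw_supp _ (right_ne_zero_of_mul hk)
        exact ⟨by omega, _, left_ne_zero_of_mul hk, by omega⟩
      · obtain ⟨hk_ge, hF⟩ := hv_supp k hvk
        exact ⟨by omega, hF⟩

theorem nlftA_eq_nlftProd (F : ℤ → ℂ) :
    nlftA F = fun z => nlftProd F (-suppBound F) (2 * suppBound F + 1) z 0 0 := by
  funext z
  rw [nlftA, nlft, nlftPartial_eq_nlftProd]

theorem nlftB_eq_nlftProd (F : ℤ → ℂ) :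
    nlftB F = fun z => nlftProd F (-suppBound F) (2 * suppBound F + 1) z 0 1 := by
  funext z
  rw [nlftB, nlft, nlftPartial_eq_nlftProd]

theorem exists_hasLaurentCoeffs_nlftA (F : ℤ → ℂ) :
    ∃ u, HasLaurentCoeffs (nlftA F) u ∧ u 0 ≠ 0 ∧ ∀ k, u k ≠ 0 → k ≤ 0 := by
  obtain ⟨u, -, hu, -, hu0, hu_supp, -⟩ := exists_hasLaurentCoeffs_nlftProd_row_zero F _ _
  exact ⟨u, nlftA_eq_nlftProd F ▸ hu, hu0, hu_supp⟩

theorem exists_hasLaurentCoeffs_nlftB_le (F : ℤ → ℂ) :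
    ∃ v, HasLaurentCoeffs (nlftB F) v ∧ ∀ k, v k ≠ 0 → ∃ n, F n ≠ 0 ∧ k ≤ n := by
  obtain ⟨-, v, -, hv, -, -, hv_supp⟩ := exists_hasLaurentCoeffs_nlftProd_row_zero F _ _
  exact ⟨v, nlftB_eq_nlftProd F ▸ hv, fun k hk => (hv_supp k hk).2⟩

theorem exists_hasLaurentCoeffs_nlftB_ge (F : ℤ → ℂ) :
    ∃ v, HasLaurentCoeffs (nlftB F) v ∧ ∀ k, v k ≠ 0 → ∃ n, F n ≠ 0 ∧ n ≤ k := by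
  obtain ⟨v, -, hv, -, -, hv_supp⟩ := exists_hasLaurentCoeffs_nlftProd_col_one F _ _
  exact ⟨v, nlftB_eq_nlftProd F ▸ hv, fun k hk => (hv_supp k hk).2⟩

theorem circCoeff_zero_nlftA_ne_zero (F : ℤ → ℂ) : circCoeff (nlftA F) 0 ≠ 0 := by
  obtain ⟨u, hu, hu0, -⟩ := exists_hasLaurentCoeffs_nlftA F
  rwa [hu.circCoeff_zero]

theorem circCoeff_zero_pairProd_nlftPair_fst (F G : ℤ → ℂ)
    (hFG : ∀ m n, F m ≠ 0 → G n ≠ 0 → m < n) :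
    circCoeff (pairProd (nlftPair F) (nlftPair G)).1 0 =
      circCoeff (nlftA F) 0 * circCoeff (nlftA G) 0 := by
  obtain ⟨a, ha, -, ha_supp⟩ := exists_hasLaurentCoeffs_nlftA F
  obtain ⟨c, hc, -, hc_supp⟩ := exists_hasLaurentCoeffs_nlftA G
  obtain ⟨b, hb, hb_supp⟩ := exists_hasLaurentCoeffs_nlftB_le F
  obtain ⟨d, hd, hd_supp⟩ := exists_hasLaurentCoeffs_nlftB_ge G
  obtain ⟨s, hs, -⟩ := id ha
  obtain ⟨t, ht, -⟩ := id hb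
  have hac : circCoeff (fun z => nlftA F z * nlftA G z) 0 = a 0 * c 0 := by
    rw [ha.circCoeff_zero_mul hc hs]
    refine Finset.sum_eq_single 0 (fun k _ hk => ?_) fun h => by rw [hs 0 h, zero_mul]
    by_cases hak : a k = 0
    · rw [hak, zero_mul]
    · have hk_neg : k < 0 := lt_of_le_of_ne (ha_supp k hak) hk
      have hck : c (-k) = 0 := by_contra fun h => by have := hc_supp _ h; omega
      rw [hck, mul_zero]
  have hbd : circCoeff (fun z => nlftB F z * starFun (nlftB G) z) 0 = 0 := by
    rw [hb.circCoeff_zero_mul hd.starFun ht]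
    refine Finset.sum_eq_zero fun k _ => ?_
    by_cases hbk : b k = 0
    · rw [hbk, zero_mul]
    by_cases hdk : d k = 0
    · rw [neg_neg, hdk, map_zero, mul_zero]
    obtain ⟨m, hm, hkm⟩ := hb_supp k hbk
    obtain ⟨n, hn, hnk⟩ := hd_supp k hdk
    exact absurd (hFG m n hm hn) (by omega)
  rw [show (pairProd (nlftPair F) (nlftPair G)).1 =
      fun z => nlftA F z * nlftA G z - nlftB F z * starFun (nlftB G) z from rfl,
    circCoeff_zero_sub (ha.continuous_comp_circMap.mul hc.continuous_comp_circMap)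
      (hb.continuous_comp_circMap.mul hd.starFun.continuous_comp_circMap),
    hac, hbd, sub_zero, ha.circCoeff_zero, hc.circCoeff_zero]

theorem conj_zpow_of_norm_eq_one {z : ℂ} (hz : ‖z‖ = 1) (n : ℤ) : conj (z ^ n) = z ^ (-n) := by
  rw [map_zpow₀, ← Complex.inv_eq_conj hz, inv_zpow, zpow_neg]

theorem nlftFactor_mem_unitaryGroup (F : ℤ → ℂ) (n : ℤ) {z : ℂ} (hz : ‖z‖ = 1) :
    nlftFactor F n z ∈ Matrix.unitaryGroup (Fin 2) ℂ := by
  have hzn : z ^ n * (z ^ n)⁻¹ = 1 := mul_inv_cancel₀ (zpow_ne_zero _ (by rintro rfl; simp at hz))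
  have hc : (Real.sqrt (1 + ‖F n‖ ^ 2) : ℂ)⁻¹ ^ 2 * (1 + F n * conj (F n)) = 1 := by
    have hpos : (0 : ℝ) < 1 + ‖F n‖ ^ 2 := by positivity
    rw [Complex.mul_conj, Complex.normSq_eq_norm_sq, inv_pow, ← Complex.ofReal_pow,
      Real.sq_sqrt hpos.le]
    exact_mod_cast inv_mul_cancel₀ hpos.ne'
  rw [Matrix.mem_unitaryGroup_iff]
  ext i j
  fin_cases i <;> fin_cases j <;>
    simp [nlftFactor, Matrix.mul_apply, conj_zpow_of_norm_eq_one hz]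
  · linear_combination hc + (Real.sqrt (1 + ‖F n‖ ^ 2) : ℂ)⁻¹ ^ 2 * F n * conj (F n) * hzn
  · ring
  · ring
  · linear_combination hc + (Real.sqrt (1 + ‖F n‖ ^ 2) : ℂ)⁻¹ ^ 2 * F n * conj (F n) * hzn

theorem nlftPartial_mem_unitaryGroup (F : ℤ → ℂ) (K : ℕ) {z : ℂ} (hz : ‖z‖ = 1) :
    nlftPartial F K z ∈ Matrix.unitaryGroup (Fin 2) ℂ :=
  Submonoid.list_prod_mem _ fun _ hM => by
    obtain ⟨_, -, rfl⟩ := List.mem_map.1 hM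
    exact nlftFactor_mem_unitaryGroup F _ hz

theorem norm_nlftA_circMap_le_one (F : ℤ → ℂ) (θ : ℝ) : ‖nlftA F (circMap θ)‖ ≤ 1 :=
  entry_norm_bound_of_unitary (nlftPartial_mem_unitaryGroup F _ (norm_circMap θ)) 0 0

theorem norm_nlftB_circMap_le_one (F : ℤ → ℂ) (θ : ℝ) : ‖nlftB F (circMap θ)‖ ≤ 1 :=
  entry_norm_bound_of_unitary (nlftPartial_mem_unitaryGroup F _ (norm_circMap θ)) 0 1

instance : IsProbabilityMeasure circMeas := ⟨by simp [circMeas]⟩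

theorem sqrt_integral_norm_sq_eq_eLpNorm {E : Type*} [NormedAddCommGroup E] {h : ℝ → E}
    (hh : MemLp h 2 circMeas) :
    √(∫ θ in (0:ℝ)..1, ‖h θ‖ ^ 2) = (eLpNorm h 2 circMeas).toReal := by
  rw [hh.eLpNorm_eq_integral_rpow_norm two_ne_zero ENNReal.ofNat_ne_top,
    ENNReal.toReal_ofReal (by positivity), intervalIntegral.integral_of_le zero_le_one,
    Real.sqrt_eq_rpow]
  simp [circMeas]

theorem sqrt_integral_norm_sq_le_sum {E E' ι : Type*} [NormedAddCommGroup E]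
    [NormedAddCommGroup E'] (s : Finset ι) {v : ℝ → E} {w : ι → ℝ → E'}
    (hv : AEStronglyMeasurable v circMeas) (hw : ∀ i ∈ s, MemLp (w i) 2 circMeas)
    (hle : ∀ θ, ‖v θ‖ ≤ ∑ i ∈ s, ‖w i θ‖) :
    √(∫ θ in (0:ℝ)..1, ‖v θ‖ ^ 2) ≤ ∑ i ∈ s, √(∫ θ in (0:ℝ)..1, ‖w i θ‖ ^ 2) := by
  have key : eLpNorm v 2 circMeas ≤ ∑ i ∈ s, eLpNorm (w i) 2 circMeas := calc
    eLpNorm v 2 circMeas ≤ eLpNorm (∑ i ∈ s, fun θ => ‖w i θ‖) 2 circMeas :=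
      eLpNorm_mono fun θ => by
        rw [Finset.sum_apply, Real.norm_of_nonneg (by positivity)]
        exact hle θ
    _ ≤ ∑ i ∈ s, eLpNorm (fun θ => ‖w i θ‖) 2 circMeas :=
      eLpNorm_sum_le (fun i hi => (hw i hi).1.norm) one_le_two
    _ = ∑ i ∈ s, eLpNorm (w i) 2 circMeas := by simp_rw [eLpNorm_norm]
  have hfin : ∀ i ∈ s, eLpNorm (w i) 2 circMeas ≠ ⊤ := fun i hi => (hw i hi).2.ne
  have hv2 : MemLp v 2 circMeas := ⟨hv, key.trans_lt (ENNReal.sum_lt_top.2 fun i hi =>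
    (hw i hi).2)⟩
  rw [sqrt_integral_norm_sq_eq_eLpNorm hv2,
    Finset.sum_congr rfl fun i hi => sqrt_integral_norm_sq_eq_eLpNorm (hw i hi),
    ← ENNReal.toReal_sum hfin]
  exact ENNReal.toReal_mono (ENNReal.sum_ne_top.2 hfin) key

theorem norm_mul_sub_mul_le {R : Type*} [SeminormedRing R] {x y x' y' : R} (hy : ‖y‖ ≤ 1)
    (hx' : ‖x'‖ ≤ 1) : ‖x * y - x' * y'‖ ≤ ‖x - x'‖ + ‖y - y'‖ := calc
  ‖x * y - x' * y'‖ = ‖(x - x') * y + x' * (y - y')‖ := by noncomm_ring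
  _ ≤ ‖x - x'‖ * ‖y‖ + ‖x'‖ * ‖y - y'‖ :=
    (norm_add_le _ _).trans (add_le_add (norm_mul_le _ _) (norm_mul_le _ _))
  _ ≤ ‖x - x'‖ + ‖y - y'‖ := by
    gcongr
    · exact mul_le_of_le_one_right (norm_nonneg _) hy
    · exact mul_le_of_le_one_left (norm_nonneg _) hx'

theorem norm_mul_sub_mul_conj_sub_le {a b c d a' b' c' d' : ℂ} (ha' : ‖a'‖ ≤ 1) (hb' : ‖b'‖ ≤ 1)
    (hc : ‖c‖ ≤ 1) (hd : ‖d‖ ≤ 1) :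
    ‖(a * c - b * conj d) - (a' * c' - b' * conj d')‖ ≤
      ‖a - a'‖ + ‖b - b'‖ + ‖c - c'‖ + ‖d - d'‖ := calc
  _ = ‖(a * c - a' * c') - (b * conj d - b' * conj d')‖ := by ring_nf
  _ ≤ (‖a - a'‖ + ‖c - c'‖) + (‖b - b'‖ + ‖conj d - conj d'‖) :=
    (norm_sub_le _ _).trans <| add_le_add (norm_mul_sub_mul_le hc ha')
      (norm_mul_sub_mul_le (by rwa [Complex.norm_conj]) hb')
  _ = _ := by rw [← map_sub, Complex.norm_conj]; ring

theorem norm_mul_add_mul_conj_sub_le {a b c d a' b' c' d' : ℂ} (ha' : ‖a'‖ ≤ 1) (hb' : ‖b'‖ ≤ 1)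
    (hc : ‖c‖ ≤ 1) (hd : ‖d‖ ≤ 1) :
    ‖(a * d + b * conj c) - (a' * d' + b' * conj c')‖ ≤
      ‖a - a'‖ + ‖b - b'‖ + ‖c - c'‖ + ‖d - d'‖ := calc
  _ = ‖(a * d - a' * d') + (b * conj c - b' * conj c')‖ := by ring_nf
  _ ≤ (‖a - a'‖ + ‖d - d'‖) + (‖b - b'‖ + ‖conj c - conj c'‖) :=
    (norm_add_le _ _).trans <| add_le_add (norm_mul_sub_mul_le hd ha')
      (norm_mul_sub_mul_le (by rwa [Complex.norm_conj]) hb')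
  _ = _ := by rw [← map_sub, Complex.norm_conj]; ring

structure IsUnitBoundedOnCircle (p : (ℂ → ℂ) × (ℂ → ℂ)) : Prop where
  measurable_fst : Measurable fun θ => p.1 (circMap θ)
  measurable_snd : Measurable fun θ => p.2 (circMap θ)
  norm_fst_le : ∀ θ, ‖p.1 (circMap θ)‖ ≤ 1
  norm_snd_le : ∀ θ, ‖p.2 (circMap θ)‖ ≤ 1

theorem measurable_starFun_comp_circMap {f : ℂ → ℂ} (hf : Measurable fun θ => f (circMap θ)) :
    Measurable fun θ => starFun f (circMap θ) := by
  simp_rw [starFun_circMap]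
  exact Complex.continuous_conj.measurable.comp hf

theorem memLp_sub_of_norm_le_one {f g : ℝ → ℂ} (hf : Measurable f) (hg : Measurable g)
    (hf1 : ∀ θ, ‖f θ‖ ≤ 1) (hg1 : ∀ θ, ‖g θ‖ ≤ 1) : MemLp (fun θ => f θ - g θ) 2 circMeas :=
  .of_bound (hf.sub hg).aestronglyMeasurable 2 <| .of_forall fun θ =>
    (norm_sub_le _ _).trans (by linarith [hf1 θ, hg1 θ])

namespace IsUnitBoundedOnCircle

variable {p p' q q' : (ℂ → ℂ) × (ℂ → ℂ)}

theorem measurable_pairProd_fst (hp : IsUnitBoundedOnCircle p) (hq : IsUnitBoundedOnCircle q) :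
    Measurable fun θ => (pairProd p q).1 (circMap θ) :=
  (hp.1.mul hq.1).sub (hp.2.mul (measurable_starFun_comp_circMap hq.2))

theorem measurable_pairProd_snd (hp : IsUnitBoundedOnCircle p) (hq : IsUnitBoundedOnCircle q) :
    Measurable fun θ => (pairProd p q).2 (circMap θ) :=
  (hp.1.mul hq.2).add (hp.2.mul (measurable_starFun_comp_circMap hq.1))

theorem sqrt_integral_le_of_norm_le (hp : IsUnitBoundedOnCircle p)
    (hp' : IsUnitBoundedOnCircle p') (hq : IsUnitBoundedOnCircle q)
    (hq' : IsUnitBoundedOnCircle q') {v : ℝ → ℂ} (hv : Measurable v)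
    (hle : ∀ θ, ‖v θ‖ ≤ ‖p.1 (circMap θ) - p'.1 (circMap θ)‖ +
      ‖p.2 (circMap θ) - p'.2 (circMap θ)‖ + ‖q.1 (circMap θ) - q'.1 (circMap θ)‖ +
      ‖q.2 (circMap θ) - q'.2 (circMap θ)‖) :
    √(∫ θ in (0:ℝ)..1, ‖v θ‖ ^ 2) ≤
      circL2dist p.1 p'.1 + circL2dist p.2 p'.2 + circL2dist q.1 q'.1 + circL2dist q.2 q'.2 := by
  have := sqrt_integral_norm_sq_le_sum Finset.univ hv.aestronglyMeasurable
    (w := ![fun θ => p.1 (circMap θ) - p'.1 (circMap θ), fun θ => p.2 (circMap θ) - p'.2 (circMap θ),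
      fun θ => q.1 (circMap θ) - q'.1 (circMap θ), fun θ => q.2 (circMap θ) - q'.2 (circMap θ)])
    (fun i _ => by
      fin_cases i
      exacts [memLp_sub_of_norm_le_one hp.1 hp'.1 hp.3 hp'.3,
        memLp_sub_of_norm_le_one hp.2 hp'.2 hp.4 hp'.4,
        memLp_sub_of_norm_le_one hq.1 hq'.1 hq.3 hq'.3,
        memLp_sub_of_norm_le_one hq.2 hq'.2 hq.4 hq'.4])
    (by simpa [Fin.sum_univ_four, add_assoc] using hle)
  simpa [Fin.sum_univ_four, circL2dist, add_assoc] using this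

theorem circL2dist_pairProd_fst_le (hp : IsUnitBoundedOnCircle p)
    (hp' : IsUnitBoundedOnCircle p') (hq : IsUnitBoundedOnCircle q)
    (hq' : IsUnitBoundedOnCircle q') :
    circL2dist (pairProd p q).1 (pairProd p' q').1 ≤
      circL2dist p.1 p'.1 + circL2dist p.2 p'.2 + circL2dist q.1 q'.1 + circL2dist q.2 q'.2 := by
  refine hp.sqrt_integral_le_of_norm_le hp' hq hq'
    ((hp.measurable_pairProd_fst hq).sub (hp'.measurable_pairProd_fst hq')) fun θ => ?_
  simp only [pairProd, starFun_circMap]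
  exact norm_mul_sub_mul_conj_sub_le (hp'.3 θ) (hp'.4 θ) (hq.3 θ) (hq.4 θ)

theorem circL2dist_pairProd_snd_le (hp : IsUnitBoundedOnCircle p)
    (hp' : IsUnitBoundedOnCircle p') (hq : IsUnitBoundedOnCircle q)
    (hq' : IsUnitBoundedOnCircle q') :
    circL2dist (pairProd p q).2 (pairProd p' q').2 ≤
      circL2dist p.1 p'.1 + circL2dist p.2 p'.2 + circL2dist q.1 q'.1 + circL2dist q.2 q'.2 := by
  refine hp.sqrt_integral_le_of_norm_le hp' hq hq'
    ((hp.measurable_pairProd_snd hq).sub (hp'.measurable_pairProd_snd hq')) fun θ => ?_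
  simp only [pairProd, starFun_circMap]
  exact norm_mul_add_mul_conj_sub_le (hp'.3 θ) (hp'.4 θ) (hq.3 θ) (hq.4 θ)

end IsUnitBoundedOnCircle

theorem isUnitBoundedOnCircle_nlftPair (F : ℤ → ℂ) : IsUnitBoundedOnCircle (nlftPair F) := by
  obtain ⟨u, hu, -⟩ := exists_hasLaurentCoeffs_nlftA F
  obtain ⟨v, hv, -⟩ := exists_hasLaurentCoeffs_nlftB_le F
  exact ⟨hu.continuous_comp_circMap.measurable, hv.continuous_comp_circMap.measurable,
    norm_nlftA_circMap_le_one F, norm_nlftB_circMap_le_one F⟩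

theorem abs_log_norm_mul_sub_le {x y x' y' : ℂ} (hx : x ≠ 0) (hy : y ≠ 0) (hx' : x' ≠ 0)
    (hy' : y' ≠ 0) :
    |Real.log ‖x * y‖ - Real.log ‖x' * y'‖| ≤
      |Real.log ‖x‖ - Real.log ‖x'‖| + |Real.log ‖y‖ - Real.log ‖y'‖| := by
  simp only [norm_mul]
  rw [Real.log_mul (norm_ne_zero_iff.2 hx) (norm_ne_zero_iff.2 hy),
    Real.log_mul (norm_ne_zero_iff.2 hx') (norm_ne_zero_iff.2 hy')]
  calc _ = |(Real.log ‖x‖ - Real.log ‖x'‖) + (Real.log ‖y‖ - Real.log ‖y'‖)| := by ring_nf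
    _ ≤ _ := abs_add_le _ _

theorem rho_submultiplicative_general (F F' G G' : ℤ → ℂ)
    (horder : ∀ m ∈ Function.support F ∪ Function.support F',
      ∀ n ∈ Function.support G ∪ Function.support G', m < n) :
    rhoDist (pairProd (nlftPair F) (nlftPair G)) (pairProd (nlftPair F') (nlftPair G')) ≤
      2 * rhoDist (nlftPair F) (nlftPair F') + 2 * rhoDist (nlftPair G) (nlftPair G') := by
  have hF := isUnitBoundedOnCircle_nlftPair F
  have hF' := isUnitBoundedOnCircle_nlftPair F'
  have hG := isUnitBoundedOnCircle_nlftPair G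
  have hG' := isUnitBoundedOnCircle_nlftPair G'
  have hfst := hF.circL2dist_pairProd_fst_le hF' hG hG'
  have hsnd := hF.circL2dist_pairProd_snd_le hF' hG hG'
  have hlog := abs_log_norm_mul_sub_le (circCoeff_zero_nlftA_ne_zero F)
    (circCoeff_zero_nlftA_ne_zero G) (circCoeff_zero_nlftA_ne_zero F')
    (circCoeff_zero_nlftA_ne_zero G')
  rw [rhoDist, circCoeff_zero_pairProd_nlftPair_fst F G fun m n hm hn => horder m (.inl hm) n (.inl hn),
    circCoeff_zero_pairProd_nlftPair_fst F' G' fun m n hm hn => horder m (.inr hm) n (.inr hn)]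
  simp only [rhoDist, nlftPair] at *
  linarith [abs_nonneg (Real.log ‖circCoeff (nlftA F) 0‖ - Real.log ‖circCoeff (nlftA F') 0‖),
    abs_nonneg (Real.log ‖circCoeff (nlftA G) 0‖ - Real.log ‖circCoeff (nlftA G') 0‖)]

/-- Theorem `rhoproduct` of the paper: compatibility of the metric
`ρ` with the product of nonlinear Fourier series of sequences with separated
supports. -/
theorem rho_submultiplicative (F F' G G' : ℤ → ℂ)
    (hF : (Function.support F).Finite) (hF' : (Function.support F').Finite)
    (hG : (Function.support G).Finite) (hG' : (Function.support G').Finite)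
    (horder : ∀ m ∈ Function.support F ∪ Function.support F',
      ∀ n ∈ Function.support G ∪ Function.support G', m < n) :
    rhoDist (pairProd (nlftPair F) (nlftPair G)) (pairProd (nlftPair F') (nlftPair G')) ≤
      2 * rhoDist (nlftPair F) (nlftPair F') + 2 * rhoDist (nlftPair G) (nlftPair G') :=
  rho_submultiplicative_general F F' G G' horder

end
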